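/- arXiv:1406.3819 — 4 statements merged into one kernel-verified Lean document; each statement's English description precedes it below -/
import Mathlib

section
/- Let C be a small category, X : C → Set a functor, and for each object c of C let S_c ⊆ X(c) be a subset. Then there exists a subfunctor V of X such that S_c ⊆ V(c) for every c, and the cardinality of the disjoint union ⨿_c V(c) is at most max(card(Mor C), ℵ₀) + Σ_c card(S_c). -/
open CategoryTheory Cardinal

universe u

/-- For a presheaf `X : C ⥤ Set` on a small category `C` and subsets `S c ⊆ X c`,
there is a subfunctor `V` of `X` containing the `S c` whose total cardinality is at
most `max (card (Mor C)) ℵ₀ + Σ_c card (S c)`. -/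
theorem subfunctor_cardinality_bound {C : Type u} [SmallCategory C]
    (X : C ⥤ Type u) (S : ∀ c : C, Set (X.obj c)) :
    ∃ V : ∀ c : C, Set (X.obj c),
      (∀ {c c' : C} (f : c ⟶ c'), ∀ x ∈ V c, X.map f x ∈ V c') ∧
      (∀ c : C, S c ⊆ V c) ∧
      #(Σ c : C, V c) ≤
        max (#(Σ p : C × C, p.1 ⟶ p.2)) ℵ₀ + Cardinal.sum (fun c : C => #(S c)) := by
  set V : ∀ c : C, Set (X.obj c) :=
    fun c => {y | ∃ (c' : C) (f : c' ⟶ c) (x : X.obj c'), x ∈ S c' ∧ X.map f x = y} with hV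
  refine ⟨V, ?_, ?_, ?_⟩
  · rintro c c' g x ⟨a, f, z, hz, rfl⟩
    exact ⟨a, f ≫ g, z, hz, FunctorToTypes.map_comp_apply X f g z⟩
  · intro c x hx
    exact ⟨c, 𝟙 c, x, hx, FunctorToTypes.map_id_apply X x⟩
  · -- surjection from Σ (q : Mor), S q.1.1 onto Σ c, V c
    set Mor := (Σ p : C × C, p.1 ⟶ p.2)
    have hsurj : Function.Surjective
        (fun t : Σ q : Mor, S q.1.1 =>
          (⟨t.1.1.2, X.map t.1.2 t.2.1,
            ⟨t.1.1.1, t.1.2, t.2.1, t.2.2, rfl⟩⟩ : Σ c : C, V c)) := by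
      rintro ⟨c, y, a, f, z, hz, rfl⟩
      exact ⟨⟨⟨(a, c), f⟩, ⟨z, hz⟩⟩, rfl⟩
    have h1 : #(Σ c : C, V c) ≤ #(Σ q : Mor, S q.1.1) := Cardinal.mk_le_of_surjective hsurj
    have h2 : #(Σ q : Mor, S q.1.1) ≤ #(Mor × Σ c : C, S c) := by
      apply Cardinal.mk_le_of_injective (f := fun t => (t.1, ⟨t.1.1.1, t.2⟩))
      rintro ⟨q, x⟩ ⟨q', x'⟩ h
      simp only [Prod.mk.injEq] at h
      obtain ⟨rfl, h2⟩ := h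
      simpa using h2
    have h3 : #(Mor × Σ c : C, S c) = #Mor * Cardinal.sum (fun c : C => #(S c)) := by
      rw [Cardinal.mk_prod, Cardinal.mk_sigma]
      simp
    have h4 : #Mor * Cardinal.sum (fun c : C => #(S c)) ≤
        max (#Mor) ℵ₀ + Cardinal.sum (fun c : C => #(S c)) := by
      refine (Cardinal.mul_le_max _ _).trans ?_
      set s := Cardinal.sum (fun c : C => #(S c))
      refine max_le (max_le ?_ ?_) ?_
      · exact le_trans (le_max_left _ ℵ₀) (self_le_add_right _ _)
      · exact self_le_add_left _ _
      · exact le_trans (le_max_right _ ℵ₀) (self_le_add_right _ _)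
    calc #(Σ c : C, V c) ≤ #(Mor × Σ c : C, S c) := h1.trans h2
      _ = _ := h3
      _ ≤ _ := h4
end

section
/- Let A be a category in which subobjects have complements (coproduct inclusions are monomorphisms, and every monomorphism X ↪ Y admits a monomorphism Z ↪ Y making X → Y ← Z a coproduct cocone), and let F : A → B preserve finite coproducts. Then F-structures extend along morphisms for the restriction of F to the subcategory of A with the same objects and only monomorphisms as morphisms. -/
/-!
Extend `U` by the complement `Z` of `X` in `Y`: take `V = U ⨿ Z` and `f` the coproduct
inclusion. Since `F` preserves binary coproducts, `F V` and `F Y` are coproducts of `F U ≅ F X`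
and `F Z`, so `i` extends to an isomorphism `F V ≅ F Y` compatible with the left inclusions.
-/

open CategoryTheory

universe v u v' u'

/-- Subobjects have complements in `A`: coproduct inclusions are monomorphisms, and
every monomorphism `X ↪ Y` admits a monomorphism `Z ↪ Y` making `X → Y ← Z` a
coproduct cocone. -/
def SubobjectsHaveComplements (A : Type u) [Category.{v} A] : Prop :=
  (∀ {X Z : A} (c : Limits.BinaryCofan X Z), Nonempty (Limits.IsColimit c) →
      Mono c.inl ∧ Mono c.inr) ∧
  (∀ {X Y : A} (m : X ⟶ Y), Mono m →
      ∃ (Z : A) (n : Z ⟶ Y), Mono n ∧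
        Nonempty (Limits.IsColimit (Limits.BinaryCofan.mk m n)))

open Limits

theorem CategoryTheory.Limits.BinaryCofan.IsColimit.exists_iso_inl_comp_hom {C : Type*}
    [Category C] {X X' Z : C} {c : BinaryCofan X Z} {d : BinaryCofan X' Z}
    (hc : IsColimit c) (hd : IsColimit d) (e : X ≅ X') :
    ∃ j : c.pt ≅ d.pt, c.inl ≫ j.hom = e.hom ≫ d.inl :=
  ⟨hc.coconePointsIsoOfNatIso hd (mapPairIso e (Iso.refl Z)),
    hc.comp_coconePointsIsoOfNatIso_hom hd _ ⟨.left⟩⟩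

/-- If subobjects have complements in `A` and `F : A ⥤ B` preserves finite coproducts,
then `F`-structures extend along morphisms for the restriction of `F` to the
subcategory of `A` with only monomorphisms as morphisms: for every monomorphism
`g : X ⟶ Y`, object `U` and isomorphism `i : F U ≅ F X`, there exist a monomorphism
`f : U ⟶ V` and an isomorphism `j : F V ≅ F Y` with `F g ∘ i = j ∘ F f`. -/
theorem extends_of_complements {A : Type u} [Category.{v} A] {B : Type u'}
    [Category.{v'} B] [Limits.HasBinaryCoproducts A]
    (F : A ⥤ B) [Limits.PreservesFiniteCoproducts F]
    (hA : SubobjectsHaveComplements A) :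
    ∀ {X Y : A} (g : X ⟶ Y), Mono g → ∀ (U : A) (i : F.obj U ≅ F.obj X),
      ∃ (V : A) (f : U ⟶ V), Mono f ∧
        ∃ j : F.obj V ≅ F.obj Y, i.hom ≫ F.map g = F.map f ≫ j.hom := by
  intro X Y g hg U i
  obtain ⟨Z, n, -, ⟨hc⟩⟩ := hA.2 g hg
  have hinl : Mono (coprod.inl : U ⟶ U ⨿ Z) :=
    (hA.1 (BinaryCofan.mk _ _) ⟨coprodIsCoprod U Z⟩).1
  obtain ⟨j, hj⟩ := BinaryCofan.IsColimit.exists_iso_inl_comp_hom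
    (isColimitOfHasBinaryCoproductOfPreservesColimit F U Z)
    (mapIsColimitOfPreservesOfIsColimit F g n hc) i
  exact ⟨U ⨿ Z, coprod.inl, hinl, j, hj.symm⟩
end

section
/- Let κ be an uncountable regular cardinal, A a category with colimits of countable chains, U an object of A, and K₁ : D₁ → A, K₂ : D₂ → A two functors such that each D_i is κ-filtered with countable filtered colimits, each K_i takes values in κ-presentable objects, preserves countable filtered colimits, and has colimit U (with colimit cocones u_i). Then for any s₁ ∈ D₁ and s₂ ∈ D₂ there exist morphisms s₁ → t₁ in D₁ and s₂ → t₂ in D₂ such that the colimit components K₁(t₁) → U and K₂(t₂) → U are isomorphic as objects of the slice category A/U. -/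
/-! Given a map `K₁ x ⟶ K₂ y` over `U`, presentability of `K₂ y` factors its structure map
through some `K₁ x₀`, and presentability of `K₁ x` makes the two resulting maps out of `K₁ x`
agree at a later stage `x'`; this gives a map `K₂ y ⟶ K₁ x'` over `U` whose composite with the
first is `K₁ (x ⟶ x')`. Alternating the two sides produces chains `x₀ ⟶ x₁ ⟶ ⋯` in `D₁` and
`y₀ ⟶ y₁ ⟶ ⋯` in `D₂` with interleaved maps over `U`. As the `Kᵢ` preserve the colimits `tᵢ`
of these chains, the interleaved maps induce mutually inverse maps `K₁ t₁ ≅ K₂ t₂` over `U`. -/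

open CategoryTheory Limits Cardinal

universe v u u'

/-- A small category `J` is `κ`-filtered if every diagram over an index category
with fewer than `κ` morphisms admits a cocone in `J`. -/
def IsCardFiltered (κ : Cardinal.{v}) (J : Type v) [SmallCategory J] : Prop :=
  ∀ (K : Type v) [SmallCategory K], #(Σ p : K × K, p.1 ⟶ p.2) < κ →
    ∀ F : K ⥤ J, Nonempty (Cocone F)

/-- An object `X` is `κ`-presentable if `Hom(X, -)` preserves `κ`-filtered colimits. -/
def IsPresObj (κ : Cardinal.{v}) {C : Type u} [Category.{v} C] (X : C) : Prop :=
  ∀ (J : Type v) [SmallCategory J], IsCardFiltered κ J →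
    ∀ (D : J ⥤ C) (c : Cocone D), Nonempty (IsColimit c) →
      Nonempty (IsColimit ((coyoneda.obj (Opposite.op X)).mapCocone c))

/-- The presentability rank of `X`: the least `κ` such that `X` is `κ`-presentable. -/
noncomputable def presRank {C : Type u} [Category.{v} C] (X : C) : Cardinal.{v} :=
  sInf {κ : Cardinal.{v} | IsPresObj κ X}

/-- A presentation of `X` as a `κ`-filtered colimit of objects from `S`. -/
structure CardFilteredPresentation (κ : Cardinal.{v}) {C : Type u} [Category.{v} C]
    (S : Set C) (X : C) where
  J : Type v
  [instJ : SmallCategory J]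
  filtered : IsCardFiltered κ J
  D : J ⥤ C
  memS : ∀ j : J, D.obj j ∈ S
  cocone : Cocone D
  isColimit : IsColimit cocone
  iso : cocone.pt ≅ X

attribute [instance] CardFilteredPresentation.instJ

/-- A category is `κ`-accessible if it has `κ`-filtered colimits and a set of
`κ`-presentable objects of which every object is a `κ`-filtered colimit. -/
def IsAccessibleCat (κ : Cardinal.{v}) (C : Type u) [Category.{v} C] : Prop :=
  (∀ (J : Type v) [SmallCategory J], IsCardFiltered κ J →
      ∀ D : J ⥤ C, ∃ c : Cocone D, Nonempty (IsColimit c)) ∧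
  ∃ S : Set C, (∀ X ∈ S, IsPresObj κ X) ∧
    ∀ X : C, Nonempty (CardFilteredPresentation κ S X)

/-- `C` has all filtered colimits. -/
def HasFilteredColimitsP (C : Type u) [Category.{v} C] : Prop :=
  ∀ (J : Type v) [SmallCategory J], IsFiltered J →
    ∀ D : J ⥤ C, ∃ c : Cocone D, Nonempty (IsColimit c)

/-- `F` preserves filtered colimits. -/
def PreservesFilteredColimitsP {A : Type u} [Category.{v} A] {B : Type u'}
    [Category.{v} B] (F : A ⥤ B) : Prop :=
  ∀ (J : Type v) [SmallCategory J], IsFiltered J →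
    ∀ (D : J ⥤ A) (c : Cocone D), Nonempty (IsColimit c) →
      Nonempty (IsColimit (F.mapCocone c))

lemma IsCardFiltered.isFiltered {κ : Cardinal.{v}} (hκ : ℵ₀ < κ) {J : Type v} [SmallCategory J]
    (hJ : IsCardFiltered κ J) : IsFiltered J :=
  IsFiltered.of_cocone_nonempty.{v} J fun {K} _ _ F =>
    hJ K ((Cardinal.lt_aleph0_of_finite _).trans hκ) F

section Presentable

variable {A : Type u} [Category.{v} A] {κ : Cardinal.{v}} {J : Type v} [SmallCategory J]
  {F : J ⥤ A} {c : Cocone F} {X : A}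

lemma IsPresObj.exists_factor (hX : IsPresObj κ X) (hJ : IsCardFiltered κ J)
    (hc : IsColimit c) (f : X ⟶ c.pt) : ∃ (j : J) (g : X ⟶ F.obj j), g ≫ c.ι.app j = f := by
  obtain ⟨hc'⟩ := hX J hJ F c ⟨hc⟩
  exact Types.jointly_surjective _ hc' f

lemma IsPresObj.exists_map_eq_map (hX : IsPresObj κ X) (hκ : ℵ₀ < κ) (hJ : IsCardFiltered κ J)
    (hc : IsColimit c) {j j' : J} (g : X ⟶ F.obj j) (g' : X ⟶ F.obj j')
    (h : g ≫ c.ι.app j = g' ≫ c.ι.app j') :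
    ∃ (k : J) (p : j ⟶ k) (q : j' ⟶ k), g ≫ F.map p = g' ≫ F.map q := by
  have := hJ.isFiltered hκ
  obtain ⟨hc'⟩ := hX J hJ F c ⟨hc⟩
  exact (Types.FilteredColimit.isColimit_eq_iff _ hc').mp h

lemma IsPresObj.exists_map_back (hX : IsPresObj κ X) (hκ : ℵ₀ < κ) (hJ : IsCardFiltered κ J)
    (hc : IsColimit c) (f : X ⟶ c.pt) {x : J} (hx : IsPresObj κ (F.obj x))
    (a : F.obj x ⟶ X) (ha : a ≫ f = c.ι.app x) :
    ∃ (x' : J) (u : x ⟶ x') (b : X ⟶ F.obj x'), a ≫ b = F.map u ∧ b ≫ c.ι.app x' = f := by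
  obtain ⟨x₀, g, hg⟩ := hX.exists_factor hJ hc f
  have hag : (a ≫ g) ≫ c.ι.app x₀ = 𝟙 (F.obj x) ≫ c.ι.app x := by
    rw [Category.id_comp, Category.assoc, hg, ha]
  obtain ⟨x', p, u, hpu⟩ := hx.exists_map_eq_map hκ hJ hc _ _ hag
  refine ⟨x', u, g ≫ F.map p, ?_, ?_⟩
  · rw [← Category.assoc, hpu, Category.id_comp]
  · rw [Category.assoc, c.w, hg]

end Presentable

structure Interleaving {A : Type u} [Category.{v} A] (F G : ℕ ⥤ A) where
  a (n : ℕ) : F.obj n ⟶ G.obj n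
  b (n : ℕ) : G.obj n ⟶ F.obj (n + 1)
  a_b (n : ℕ) : a n ≫ b n = F.map (homOfLE (n.le_add_right 1))
  b_a (n : ℕ) : b n ≫ a (n + 1) = G.map (homOfLE (n.le_add_right 1))

namespace Interleaving

variable {A : Type u} [Category.{v} A] {F G : ℕ ⥤ A} (I : Interleaving F G)

abbrev coconeForth (cG : Cocone G) : Cocone F where
  pt := cG.pt
  ι := NatTrans.ofSequence (fun n => I.a n ≫ cG.ι.app n) fun n => by
    simp [← I.a_b, reassoc_of% I.b_a]

abbrev coconeBack (cF : Cocone F) : Cocone G where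
  pt := cF.pt
  ι := NatTrans.ofSequence (fun n => I.b n ≫ cF.ι.app (n + 1)) fun n => by
    simp [← I.b_a, reassoc_of% I.a_b]

noncomputable def isoOfIsColimit {cF : Cocone F} {cG : Cocone G} (hF : IsColimit cF)
    (hG : IsColimit cG) : cF.pt ≅ cG.pt where
  hom := hF.desc (I.coconeForth cG)
  inv := hG.desc (I.coconeBack cF)
  hom_inv_id := hF.hom_ext fun n => by simp [reassoc_of% I.a_b]
  inv_hom_id := hG.hom_ext fun n => by simp [reassoc_of% I.b_a]

@[simp]
lemma ι_isoOfIsColimit_hom {cF : Cocone F} {cG : Cocone G} (hF : IsColimit cF)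
    (hG : IsColimit cG) (n : ℕ) :
    cF.ι.app n ≫ (I.isoOfIsColimit hF hG).hom = I.a n ≫ cG.ι.app n :=
  hF.fac _ n

lemma isoOfIsColimit_hom_comp {cF : Cocone F} {cG : Cocone G} (hF : IsColimit cF)
    (hG : IsColimit cG) {U : A} (gF : cF.pt ⟶ U) (gG : cG.pt ⟶ U)
    (h : ∀ n, I.a n ≫ cG.ι.app n ≫ gG = cF.ι.app n ≫ gF) :
    (I.isoOfIsColimit hF hG).hom ≫ gG = gF :=
  hF.hom_ext fun n => by rw [← Category.assoc, I.ι_isoOfIsColimit_hom, Category.assoc, h]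

end Interleaving

section BackAndForth

variable {A : Type u} [Category.{v} A] {κ : Cardinal.{v}} {U : A}
  {D₁ : Type v} [SmallCategory D₁] {D₂ : Type v} [SmallCategory D₂] {K₁ : D₁ ⥤ A} {K₂ : D₂ ⥤ A}

structure CompatibleMap (ι₁ : K₁ ⟶ (Functor.const D₁).obj U)
    (ι₂ : K₂ ⟶ (Functor.const D₂).obj U) where
  x : D₁
  y : D₂
  a : K₁.obj x ⟶ K₂.obj y
  w : a ≫ ι₂.app y = ι₁.app x

variable {ι₁ : K₁ ⟶ (Functor.const D₁).obj U} {ι₂ : K₂ ⟶ (Functor.const D₂).obj U}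

lemma CompatibleMap.exists_after (hκ : ℵ₀ < κ) (hD₂ : IsCardFiltered κ D₂)
    (h₂ : IsColimit (Cocone.mk U ι₂)) (hK₁ : ∀ d, IsPresObj κ (K₁.obj d)) (s₁ : D₁) (s₂ : D₂) :
    ∃ p : CompatibleMap ι₁ ι₂, Nonempty (s₁ ⟶ p.x) ∧ Nonempty (s₂ ⟶ p.y) := by
  have := hD₂.isFiltered hκ
  obtain ⟨y, g, hg⟩ := (hK₁ s₁).exists_factor hD₂ h₂ (ι₁.app s₁)
  refine ⟨⟨s₁, IsFiltered.max s₂ y, g ≫ K₂.map (IsFiltered.rightToMax s₂ y), ?_⟩,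
    ⟨𝟙 s₁⟩, ⟨IsFiltered.leftToMax s₂ y⟩⟩
  simpa using hg

lemma CompatibleMap.exists_next (hκ : ℵ₀ < κ) (hD₁ : IsCardFiltered κ D₁)
    (hD₂ : IsCardFiltered κ D₂) (h₁ : IsColimit (Cocone.mk U ι₁))
    (h₂ : IsColimit (Cocone.mk U ι₂)) (hK₁ : ∀ d, IsPresObj κ (K₁.obj d))
    (hK₂ : ∀ d, IsPresObj κ (K₂.obj d)) (p : CompatibleMap ι₁ ι₂) :
    ∃ (q : CompatibleMap ι₁ ι₂) (u : p.x ⟶ q.x) (v : p.y ⟶ q.y) (b : K₂.obj p.y ⟶ K₁.obj q.x),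
      p.a ≫ b = K₁.map u ∧ b ≫ q.a = K₂.map v := by
  obtain ⟨x', u, b, hab, hb⟩ :=
    (hK₂ p.y).exists_map_back hκ hD₁ h₁ (ι₂.app p.y) (hK₁ p.x) p.a p.w
  obtain ⟨y', v, a', hba, ha'⟩ :=
    (hK₁ x').exists_map_back hκ hD₂ h₂ (ι₁.app x') (hK₂ p.y) b hb
  exact ⟨⟨x', y', a', ha'⟩, u, v, b, hab, hba⟩

lemma exists_interleaving_over (hκ : ℵ₀ < κ) (hD₁ : IsCardFiltered κ D₁)
    (hD₂ : IsCardFiltered κ D₂) (h₁ : IsColimit (Cocone.mk U ι₁))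
    (h₂ : IsColimit (Cocone.mk U ι₂)) (hK₁ : ∀ d, IsPresObj κ (K₁.obj d))
    (hK₂ : ∀ d, IsPresObj κ (K₂.obj d)) (s₁ : D₁) (s₂ : D₂) :
    ∃ (E₁ : ℕ ⥤ D₁) (E₂ : ℕ ⥤ D₂) (I : Interleaving (E₁ ⋙ K₁) (E₂ ⋙ K₂)),
      Nonempty (s₁ ⟶ E₁.obj 0) ∧ Nonempty (s₂ ⟶ E₂.obj 0) ∧
        ∀ n, I.a n ≫ ι₂.app (E₂.obj n) = ι₁.app (E₁.obj n) := by
  obtain ⟨p, hs₁, hs₂⟩ := CompatibleMap.exists_after hκ hD₂ h₂ hK₁ s₁ s₂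
  choose next u v b hab hba using CompatibleMap.exists_next hκ hD₁ hD₂ h₁ h₂ hK₁ hK₂
  -- `Nat.rec` rather than iteration, so that `chain (n + 1)` is `next (chain n)` definitionally
  let chain (n : ℕ) : CompatibleMap ι₁ ι₂ := Nat.rec p (fun _ q => next q) n
  refine ⟨Functor.ofSequence fun n => u (chain n), Functor.ofSequence fun n => v (chain n),
    ⟨fun n => (chain n).a, fun n => b (chain n), fun n => ?_, fun n => ?_⟩, hs₁, hs₂,
    fun n => (chain n).w⟩
  · rw [Functor.comp_map, Functor.ofSequence_map_homOfLE_succ]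
    exact hab (chain n)
  · rw [Functor.comp_map, Functor.ofSequence_map_homOfLE_succ]
    exact hba (chain n)

end BackAndForth

theorem back_and_forth_fixed_points_general {A : Type u} [Category.{v} A]
    (κ : Cardinal.{v}) (hunc : ℵ₀ < κ)
    (U : A)
    (D₁ : Type v) [SmallCategory D₁] (D₂ : Type v) [SmallCategory D₂]
    (hD₁ : IsCardFiltered κ D₁) (hD₂ : IsCardFiltered κ D₂)
    (hD₁c : ∀ E : ℕ ⥤ D₁, ∃ c : Cocone E, Nonempty (IsColimit c))
    (hD₂c : ∀ E : ℕ ⥤ D₂, ∃ c : Cocone E, Nonempty (IsColimit c))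
    (K₁ : D₁ ⥤ A) (K₂ : D₂ ⥤ A)
    (hK₁p : ∀ d : D₁, IsPresObj κ (K₁.obj d)) (hK₂p : ∀ d : D₂, IsPresObj κ (K₂.obj d))
    (hK₁pres : ∀ (E : ℕ ⥤ D₁) (c : Cocone E), IsColimit c →
      Nonempty (IsColimit (K₁.mapCocone c)))
    (hK₂pres : ∀ (E : ℕ ⥤ D₂) (c : Cocone E), IsColimit c →
      Nonempty (IsColimit (K₂.mapCocone c)))
    (c₁ : Cocone K₁) (h₁ : IsColimit c₁) (hpt₁ : c₁.pt = U)
    (c₂ : Cocone K₂) (h₂ : IsColimit c₂) (hpt₂ : c₂.pt = U)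
    (s₁ : D₁) (s₂ : D₂) :
    ∃ (t₁ : D₁) (t₂ : D₂), Nonempty (s₁ ⟶ t₁) ∧ Nonempty (s₂ ⟶ t₂) ∧
      ∃ e : K₁.obj t₁ ≅ K₂.obj t₂,
        e.hom ≫ c₂.ι.app t₂ ≫ eqToHom hpt₂ = c₁.ι.app t₁ ≫ eqToHom hpt₁ := by
  let ι₁ : K₁ ⟶ (Functor.const D₁).obj U := c₁.ι ≫ (Functor.const D₁).map (eqToHom hpt₁)
  let ι₂ : K₂ ⟶ (Functor.const D₂).obj U := c₂.ι ≫ (Functor.const D₂).map (eqToHom hpt₂)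
  have h₁U : IsColimit (Cocone.mk U ι₁) := h₁.ofIsoColimit (Cocone.ext (eqToIso hpt₁))
  have h₂U : IsColimit (Cocone.mk U ι₂) := h₂.ofIsoColimit (Cocone.ext (eqToIso hpt₂))
  obtain ⟨E₁, E₂, I, ⟨i₁⟩, ⟨i₂⟩, hI⟩ :=
    exists_interleaving_over hunc hD₁ hD₂ h₁U h₂U hK₁p hK₂p s₁ s₂
  obtain ⟨d₁, ⟨hd₁⟩⟩ := hD₁c E₁
  obtain ⟨d₂, ⟨hd₂⟩⟩ := hD₂c E₂
  obtain ⟨hKd₁⟩ := hK₁pres E₁ d₁ hd₁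
  obtain ⟨hKd₂⟩ := hK₂pres E₂ d₂ hd₂
  refine ⟨d₁.pt, d₂.pt, ⟨i₁ ≫ d₁.ι.app 0⟩, ⟨i₂ ≫ d₂.ι.app 0⟩, I.isoOfIsColimit hKd₁ hKd₂, ?_⟩
  exact I.isoOfIsColimit_hom_comp hKd₁ hKd₂ (ι₁.app d₁.pt) (ι₂.app d₂.pt) fun n => by
    simp [hI n]

/-- The back-and-forth fixed point lemma: if `κ` is uncountable regular, `A` has
colimits of countable chains, and `K₁ : D₁ ⥤ A`, `K₂ : D₂ ⥤ A` are functors from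
`κ`-filtered categories with countable chain colimits, taking `κ`-presentable
values, preserving countable chain colimits, and both with colimit `U`, then any
`s₁ ∈ D₁`, `s₂ ∈ D₂` admit maps `s₁ ⟶ t₁`, `s₂ ⟶ t₂` such that the colimit
components `K₁ t₁ ⟶ U` and `K₂ t₂ ⟶ U` are isomorphic in the slice category `A/U`. -/
theorem back_and_forth_fixed_points {A : Type u} [Category.{v} A]
    (κ : Cardinal.{v}) (hreg : κ.IsRegular) (hunc : ℵ₀ < κ)
    (hA : ∀ D : ℕ ⥤ A, ∃ c : Cocone D, Nonempty (IsColimit c))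
    (U : A)
    (D₁ : Type v) [SmallCategory D₁] (D₂ : Type v) [SmallCategory D₂]
    (hD₁ : IsCardFiltered κ D₁) (hD₂ : IsCardFiltered κ D₂)
    (hD₁c : ∀ E : ℕ ⥤ D₁, ∃ c : Cocone E, Nonempty (IsColimit c))
    (hD₂c : ∀ E : ℕ ⥤ D₂, ∃ c : Cocone E, Nonempty (IsColimit c))
    (K₁ : D₁ ⥤ A) (K₂ : D₂ ⥤ A)
    (hK₁p : ∀ d : D₁, IsPresObj κ (K₁.obj d)) (hK₂p : ∀ d : D₂, IsPresObj κ (K₂.obj d))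
    (hK₁pres : ∀ (E : ℕ ⥤ D₁) (c : Cocone E), IsColimit c →
      Nonempty (IsColimit (K₁.mapCocone c)))
    (hK₂pres : ∀ (E : ℕ ⥤ D₂) (c : Cocone E), IsColimit c →
      Nonempty (IsColimit (K₂.mapCocone c)))
    (c₁ : Cocone K₁) (h₁ : IsColimit c₁) (hpt₁ : c₁.pt = U)
    (c₂ : Cocone K₂) (h₂ : IsColimit c₂) (hpt₂ : c₂.pt = U)
    (s₁ : D₁) (s₂ : D₂) :
    ∃ (t₁ : D₁) (t₂ : D₂), Nonempty (s₁ ⟶ t₁) ∧ Nonempty (s₂ ⟶ t₂) ∧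
      ∃ e : K₁.obj t₁ ≅ K₂.obj t₂,
        e.hom ≫ c₂.ι.app t₂ ≫ eqToHom hpt₂ = c₁.ι.app t₁ ≫ eqToHom hpt₁ :=
  back_and_forth_fixed_points_general κ hunc U D₁ D₂ hD₁ hD₂ hD₁c hD₂c K₁ K₂ hK₁p hK₂p hK₁pres
    hK₂pres c₁ h₁ hpt₁ c₂ h₂ hpt₂ s₁ s₂
end

section
/- Let C be a small category and X an object of the presheaf category Set^C with card(Mor C) + ℵ₀ < card(⨿_c X(c)). Given subsets S_c ⊆ X(c) with card(Mor C) + ℵ₀ < Σ_c card(S_c), there exists a subfunctor V of X with S_c ⊆ V(c) for all c and card(⨿_c V(c)) = Σ_c card(S_c). -/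
open CategoryTheory Cardinal

universe u

/-- For a presheaf `X : C ⥤ Set` on a small category `C` whose total cardinality
exceeds `max (card (Mor C)) ℵ₀`, and subsets `S c ⊆ X c` with
`max (card (Mor C)) ℵ₀ < Σ_c card (S c)`, there is a subfunctor `V` of `X` containing
the `S c` with total cardinality exactly `Σ_c card (S c)`. -/
theorem subfunctor_exact_cardinality {C : Type u} [SmallCategory C]
    (X : C ⥤ Type u) (S : ∀ c : C, Set (X.obj c))
    (hX : max (#(Σ p : C × C, p.1 ⟶ p.2)) ℵ₀ < #(Σ c : C, X.obj c))
    (hS : max (#(Σ p : C × C, p.1 ⟶ p.2)) ℵ₀ < Cardinal.sum (fun c : C => #(S c))) :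
    ∃ V : ∀ c : C, Set (X.obj c),
      (∀ {c c' : C} (f : c ⟶ c'), ∀ x ∈ V c, X.map f x ∈ V c') ∧
      (∀ c : C, S c ⊆ V c) ∧
      #(Σ c : C, V c) = Cardinal.sum (fun c : C => #(S c)) := by
  set V : ∀ c : C, Set (X.obj c) :=
    fun c' => { y | ∃ (c : C) (f : c ⟶ c') (x : X.obj c), x ∈ S c ∧ X.map f x = y } with hV
  refine ⟨V, ?_, ?_, ?_⟩
  · rintro c c' f y ⟨d, g, x, hx, rfl⟩
    exact ⟨d, g ≫ f, x, hx, by simp⟩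
  · intro c x hx
    exact ⟨c, 𝟙 c, x, hx, by simp⟩
  · have hsum : Cardinal.sum (fun c : C => #(S c)) = #(Σ c : C, S c) :=
      (Cardinal.mk_sigma _).symm
    apply le_antisymm
    · -- surjection from Σ (f : Mor), S f.src
      have hsurj : Function.Surjective
          (fun z : Σ f : (Σ p : C × C, p.1 ⟶ p.2), S f.1.1 =>
            (⟨z.1.1.2, X.map z.1.2 z.2.1, z.1.1.1, z.1.2, z.2.1, z.2.2, rfl⟩ :
              Σ c : C, V c)) := by
        rintro ⟨c', y, d, f, x, hx, rfl⟩
        exact ⟨⟨⟨(d, c'), f⟩, ⟨x, hx⟩⟩, rfl⟩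
      have h1 : #(Σ c : C, V c) ≤ #(Σ f : (Σ p : C × C, p.1 ⟶ p.2), S f.1.1) :=
        Cardinal.mk_le_of_surjective hsurj
      have h2 : #(Σ f : (Σ p : C × C, p.1 ⟶ p.2), S f.1.1) ≤
          #(Σ p : C × C, p.1 ⟶ p.2) * #(Σ c : C, S c) := by
        rw [Cardinal.mk_sigma, ← Cardinal.sum_const']
        refine Cardinal.sum_le_sum _ _ (fun f => ?_)
        exact Cardinal.mk_le_of_injective (f := fun x : S f.1.1 => (⟨f.1.1, x⟩ : Σ c, S c))
          (fun x y h => by simpa using h)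
      have h3 : #(Σ p : C × C, p.1 ⟶ p.2) * #(Σ c : C, S c) ≤
          Cardinal.sum (fun c : C => #(S c)) := by
        calc #(Σ p : C × C, p.1 ⟶ p.2) * #(Σ c : C, S c)
            ≤ max (max (#(Σ p : C × C, p.1 ⟶ p.2)) (#(Σ c : C, S c))) ℵ₀ :=
              Cardinal.mul_le_max _ _
          _ ≤ Cardinal.sum (fun c : C => #(S c)) := by
              refine max_le (max_le ((le_max_left _ _).trans hS.le) hsum.ge) ?_
              exact (le_max_right _ _).trans hS.le
      exact h1.trans (h2.trans h3)
    · rw [hsum, Cardinal.mk_sigma, Cardinal.mk_sigma]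
      exact Cardinal.sum_le_sum _ _ (fun c =>
        Cardinal.mk_le_mk_of_subset (fun x hx => ⟨c, 𝟙 c, x, hx, by simp⟩))
end
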